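/- arXiv:0709.1103 — 2 statements merged into one kernel-verified Lean document; each statement's English description precedes it below -/
import Mathlib

section
/- If u > 0 is smooth and solves the complex Monge-Ampère equation J[u] = 1, then the metric g_{a b̄} = (log(1/u))_{a b̄} is Kähler-Einstein with Ricci curvature R_{a b̄} = -(m+1) g_{a b̄}. -/
open Complex Matrix
open scoped ComplexOrder

/-- Wirtinger derivative `∂/∂z_j`. -/
noncomputable def wdz {m : ℕ} (j : Fin m) (f : (Fin m → ℂ) → ℂ) (z : Fin m → ℂ) : ℂ :=
  (fderiv ℝ f z (Pi.single j 1) - Complex.I * fderiv ℝ f z (Pi.single j Complex.I)) / 2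

/-- Wirtinger derivative `∂/∂z̄_j`. -/
noncomputable def wdzbar {m : ℕ} (j : Fin m) (f : (Fin m → ℂ) → ℂ) (z : Fin m → ℂ) : ℂ :=
  (fderiv ℝ f z (Pi.single j 1) + Complex.I * fderiv ℝ f z (Pi.single j Complex.I)) / 2

/-- The `(m+1)×(m+1)` bordered matrix with top-left entry `u`, top row `b`,
left column `a`, lower-right block `A`. -/
noncomputable def borderedMat {m : ℕ} (u : ℂ) (b a : Fin m → ℂ)
    (A : Matrix (Fin m) (Fin m) ℂ) : Matrix (Fin 1 ⊕ Fin m) (Fin 1 ⊕ Fin m) ℂ :=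
  Matrix.fromBlocks (Matrix.of fun _ _ => u) (Matrix.of fun _ k => b k)
    (Matrix.of fun j _ => a j) A

/-- Complex Monge–Ampère operator `J[w] = (-1)^m det [[w, w_k̄],[w_j, w_jk̄]]`. -/
noncomputable def MAop (m : ℕ) (w : (Fin m → ℂ) → ℂ) (z : Fin m → ℂ) : ℂ :=
  (-1 : ℂ) ^ m *
    (borderedMat (w z) (fun k => wdzbar k w z) (fun j => wdz j w z)
      (Matrix.of fun j k => wdz j (fun y => wdzbar k w y) z)).det


lemma wdz_congr {m : ℕ} (j : Fin m) {f g : (Fin m → ℂ) → ℂ} {z : Fin m → ℂ}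
    (h : f =ᶠ[nhds z] g) : wdz j f z = wdz j g z := by
  unfold wdz; rw [h.fderiv_eq]

lemma wdzbar_congr {m : ℕ} (j : Fin m) {f g : (Fin m → ℂ) → ℂ} {z : Fin m → ℂ}
    (h : f =ᶠ[nhds z] g) : wdzbar j f z = wdzbar j g z := by
  unfold wdzbar; rw [h.fderiv_eq]

lemma wdz_const_mul {m : ℕ} (j : Fin m) (c : ℂ) {f : (Fin m → ℂ) → ℂ} {z : Fin m → ℂ}
    (hf : DifferentiableAt ℝ f z) : wdz j (fun w => c * f w) z = c * wdz j f z := by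
  unfold wdz; rw [fderiv_const_mul hf c]; simp; ring

lemma wdzbar_const_mul {m : ℕ} (j : Fin m) (c : ℂ) {f : (Fin m → ℂ) → ℂ} {z : Fin m → ℂ}
    (hf : DifferentiableAt ℝ f z) : wdzbar j (fun w => c * f w) z = c * wdzbar j f z := by
  unfold wdzbar; rw [fderiv_const_mul hf c]; simp; ring

lemma wdzbar_smooth {m : ℕ} (j : Fin m) {f : (Fin m → ℂ) → ℂ}
    (hf : ContDiff ℝ (⊤ : ℕ∞) f) : ContDiff ℝ (⊤ : ℕ∞) (fun y => wdzbar j f y) := by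
  have hd : ContDiff ℝ (⊤ : ℕ∞) (fderiv ℝ f) := hf.fderiv_right (by simp)
  have h1 : ContDiff ℝ (⊤ : ℕ∞) (fun y => fderiv ℝ f y (Pi.single j 1)) :=
    hd.clm_apply contDiff_const
  have h2 : ContDiff ℝ (⊤ : ℕ∞) (fun y => fderiv ℝ f y (Pi.single j Complex.I)) :=
    hd.clm_apply contDiff_const
  unfold wdzbar
  exact (h1.add (contDiff_const.mul h2)).div_const 2

/-- if `u > 0` is smooth with `J[u] = 1` and
`v_{jk̄} = (log(1/u))_{jk̄}` positive definite, then the metric is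
Kähler–Einstein: `R_{ab̄} = -(log det(v_{jk̄}))_{ab̄} = -(m+1) v_{ab̄}`. -/
theorem stmt5 (m : ℕ) (Ω : Set (Fin m → ℂ)) (hΩ : IsOpen Ω)
    (u : (Fin m → ℂ) → ℝ) (hu : ContDiff ℝ (⊤ : ℕ∞) u) (hupos : ∀ z, 0 < u z)
    (hMA : ∀ z ∈ Ω,
      (u z : ℂ) ^ (m + 1) * Matrix.det (Matrix.of fun j k : Fin m =>
        wdz j (fun y => wdzbar k (fun w => (Real.log (1 / u w) : ℂ)) y) z) = 1)
    (hpos : ∀ z ∈ Ω, (Matrix.of fun j k : Fin m =>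
        wdz j (fun y => wdzbar k (fun w => (Real.log (1 / u w) : ℂ)) y) z).PosDef) :
    ∀ z ∈ Ω, ∀ a b : Fin m,
      -(wdz a (fun y => wdzbar b (fun w =>
          Complex.log (Matrix.det (Matrix.of fun j k : Fin m =>
            wdz j (fun y' => wdzbar k (fun w' => (Real.log (1 / u w') : ℂ)) y') w))) y) z)
        = -((m : ℂ) + 1) *
            wdz a (fun y => wdzbar b (fun w => (Real.log (1 / u w) : ℂ)) y) z := by
  intro z hz a b
  set g : (Fin m → ℂ) → ℂ := fun w => (Real.log (1 / u w) : ℂ) with hgdef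
  set F : (Fin m → ℂ) → ℂ := fun w =>
      Complex.log (Matrix.det (Matrix.of fun j k : Fin m =>
        wdz j (fun y' => wdzbar k (fun w' => (Real.log (1 / u w') : ℂ)) y') w)) with hFdef
  set c : ℂ := (m : ℂ) + 1 with hcdef
  have hg : ContDiff ℝ (⊤ : ℕ∞) g := by
    refine contDiff_iff_contDiffAt.mpr fun w => ?_
    have h1 : ContDiffAt ℝ (⊤ : ℕ∞) (fun w => 1 / u w) w :=
      (contDiff_const.div hu fun x => (hupos x).ne').contDiffAt
    have h2 : ContDiffAt ℝ (⊤ : ℕ∞) Real.log (1 / u w) :=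
      Real.contDiffAt_log.mpr (one_div_pos.mpr (hupos w)).ne'
    have h3 : ContDiffAt ℝ (⊤ : ℕ∞) (Real.log ∘ fun w => 1 / u w) w := h2.comp w h1
    exact Complex.ofRealCLM.contDiff.contDiffAt.comp _ h3
  have hgd : ∀ y, DifferentiableAt ℝ g y := fun y =>
    (hg.differentiable (by simp)).differentiableAt
  have hFg : ∀ w ∈ Ω, F w = c * g w := by
    intro w hw
    have hd := hMA w hw
    have hdet : Matrix.det (Matrix.of fun j k : Fin m =>
        wdz j (fun y => wdzbar k (fun w' => (Real.log (1 / u w') : ℂ)) y) w)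
        = ((u w : ℂ) ^ (m + 1))⁻¹ := eq_inv_of_mul_eq_one_left (by
          rw [mul_comm]; exact hd)
    have hcast : ((u w : ℂ) ^ (m + 1))⁻¹ = (((u w ^ (m + 1))⁻¹ : ℝ) : ℂ) := by push_cast; ring
    have hpos' : (0:ℝ) ≤ (u w ^ (m + 1))⁻¹ := inv_nonneg.mpr (pow_nonneg (hupos w).le _)
    rw [hFdef]
    simp only [hdet, hcast, ← Complex.ofReal_log hpos']
    rw [hgdef, hcdef]
    push_cast [Real.log_inv, Real.log_pow, one_div]
    ring
  have hstep1 : ∀ y ∈ Ω, wdzbar b F y = c * wdzbar b g y := by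
    intro y hy
    have heq : F =ᶠ[nhds y] fun w => c * g w :=
      Filter.eventuallyEq_of_mem (hΩ.mem_nhds hy) hFg
    rw [wdzbar_congr b heq, wdzbar_const_mul b c (hgd y)]
  have hstep2 : wdz a (fun y => wdzbar b F y) z = wdz a (fun y => c * wdzbar b g y) z :=
    wdz_congr a (Filter.eventuallyEq_of_mem (hΩ.mem_nhds hz) hstep1)
  have hstep3 : wdz a (fun y => c * wdzbar b g y) z = c * wdz a (fun y => wdzbar b g y) z :=
    wdz_const_mul a c ((wdzbar_smooth b hg).differentiable (by simp)).differentiableAt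
  rw [hstep2, hstep3]
  ring
end

section
/- Let ρ be a smooth function vanishing on a hypersurface {ρ = 0} and η a smooth function. Then on the set {ρ = 0}, the Monge-Ampère operator satisfies J[ηρ] = η^{m+1} J[ρ]. -/
open Complex Matrix

section lems
variable {m : ℕ} {f g : (Fin m → ℂ) → ℂ}

lemma wdz_mul (j : Fin m) (z : Fin m → ℂ) (hf : DifferentiableAt ℝ f z)
    (hg : DifferentiableAt ℝ g z) :
    wdz j (fun y => f y * g y) z = f z * wdz j g z + g z * wdz j f z := by
  simp only [wdz, fderiv_fun_mul hf hg, ContinuousLinearMap.add_apply,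
    ContinuousLinearMap.smul_apply, smul_eq_mul]
  ring

lemma wdzbar_mul (j : Fin m) (z : Fin m → ℂ) (hf : DifferentiableAt ℝ f z)
    (hg : DifferentiableAt ℝ g z) :
    wdzbar j (fun y => f y * g y) z = f z * wdzbar j g z + g z * wdzbar j f z := by
  simp only [wdzbar, fderiv_fun_mul hf hg, ContinuousLinearMap.add_apply,
    ContinuousLinearMap.smul_apply, smul_eq_mul]
  ring

lemma wdz_add (j : Fin m) (z : Fin m → ℂ) (hf : DifferentiableAt ℝ f z)
    (hg : DifferentiableAt ℝ g z) :
    wdz j (fun y => f y + g y) z = wdz j f z + wdz j g z := by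
  simp only [wdz, fderiv_fun_add hf hg, ContinuousLinearMap.add_apply]
  ring

lemma contDiff_wdz (j : Fin m) (hf : ContDiff ℝ (⊤ : ℕ∞) f) : ContDiff ℝ (⊤ : ℕ∞) (wdz j f) := by
  have h : ContDiff ℝ (⊤ : ℕ∞) (fderiv ℝ f) := hf.fderiv_right (by simp)
  exact (((h.clm_apply contDiff_const).sub
    (contDiff_const.mul (h.clm_apply contDiff_const)))).div_const 2

lemma contDiff_wdzbar (j : Fin m) (hf : ContDiff ℝ (⊤ : ℕ∞) f) : ContDiff ℝ (⊤ : ℕ∞) (wdzbar j f) := by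
  have h : ContDiff ℝ (⊤ : ℕ∞) (fderiv ℝ f) := hf.fderiv_right (by simp)
  exact (((h.clm_apply contDiff_const).add
    (contDiff_const.mul (h.clm_apply contDiff_const)))).div_const 2

end lems

lemma key {m : ℕ} (e : ℂ) (a b c d : Fin m → ℂ) (A : Matrix (Fin m) (Fin m) ℂ) :
    (borderedMat 0 (fun k => e * b k) (fun j => e * a j)
      (Matrix.of fun j k => e * A j k + c j * b k + a j * d k)).det
    = e ^ (m + 1) * (borderedMat 0 b a A).det := by
  rcases eq_or_ne e 0 with he | he
  · subst he
    rw [Matrix.det_eq_zero_of_row_eq_zero (Sum.inl 0)]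
    · simp
    · rintro (j | j) <;> simp [borderedMat]
  · have hM : (borderedMat 0 (fun k => e * b k) (fun j => e * a j)
        (Matrix.of fun j k => e * A j k + c j * b k + a j * d k)) =
        Matrix.fromBlocks (Matrix.of fun _ _ => e) 0 (Matrix.of fun j _ => c j)
            (e • (1 : Matrix (Fin m) (Fin m) ℂ))
          * (borderedMat 0 b a A)
          * Matrix.fromBlocks 1 (Matrix.of fun _ k => d k / e) 0 1 := by
      ext i j
      rcases i with i | i <;> rcases j with j | j <;>
        simp [borderedMat, Matrix.mul_apply, Matrix.fromBlocks, Fintype.sum_sum_type,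
          Matrix.one_apply, Finset.mul_sum, Finset.sum_ite_eq, mul_comm, mul_assoc,
          Fin.eq_zero] <;>
        field_simp <;> ring
    rw [hM, Matrix.det_mul, Matrix.det_mul, Matrix.det_fromBlocks_zero₁₂,
      Matrix.det_fromBlocks_zero₂₁, Matrix.det_smul, Matrix.det_one, Matrix.det_one]
    simp only [Matrix.det_fin_one, Matrix.of_apply, Fintype.card_fin, smul_eq_mul, mul_one, one_mul]
    ring


/-- on the set `{ρ = 0}`, `J[ηρ] = η^(m+1) J[ρ]`. -/
theorem stmt6 (m : ℕ) (ρ η : (Fin m → ℂ) → ℝ)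
    (hρ : ContDiff ℝ (⊤ : ℕ∞) ρ) (hη : ContDiff ℝ (⊤ : ℕ∞) η) :
    ∀ p, ρ p = 0 →
      MAop m (fun z => ((η z * ρ z : ℝ) : ℂ)) p =
        (η p : ℂ) ^ (m + 1) * MAop m (fun z => (ρ z : ℂ)) p := by
  intro p hp
  set f : (Fin m → ℂ) → ℂ := fun z => (η z : ℂ) with hfdef
  set g : (Fin m → ℂ) → ℂ := fun z => (ρ z : ℂ) with hgdef
  have hfc : ContDiff ℝ (⊤ : ℕ∞) f := Complex.ofRealCLM.contDiff.comp hη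
  have hgc : ContDiff ℝ (⊤ : ℕ∞) g := Complex.ofRealCLM.contDiff.comp hρ
  have hfd : ∀ z, DifferentiableAt ℝ f z := fun z => (hfc.differentiable (by simp)) z
  have hgd : ∀ z, DifferentiableAt ℝ g z := fun z => (hgc.differentiable (by simp)) z
  have hgp : g p = 0 := by simp [hgdef, hp]
  have hw : (fun z => ((η z * ρ z : ℝ) : ℂ)) = fun z => f z * g z := by
    funext z; push_cast; ring
  rw [hw]
  -- first derivatives of the product
  have h1 : ∀ k z, wdzbar k (fun y => f y * g y) z = f z * wdzbar k g z + g z * wdzbar k f z :=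
    fun k z => wdzbar_mul k z (hfd z) (hgd z)
  have h1' : ∀ j, wdz j (fun y => f y * g y) p = f p * wdz j g p :=
    fun j => by rw [wdz_mul j p (hfd p) (hgd p), hgp]; ring
  have h1'' : ∀ k, wdzbar k (fun y => f y * g y) p = f p * wdzbar k g p :=
    fun k => by rw [h1 k p, hgp]; ring
  -- second derivatives
  have h2 : ∀ j k, wdz j (fun y => wdzbar k (fun y' => f y' * g y') y) p
      = f p * wdz j (fun y => wdzbar k g y) p
        + wdz j f p * wdzbar k g p + wdz j g p * wdzbar k f p := by
    intro j k
    have he : (fun y => wdzbar k (fun y' => f y' * g y') y) =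
        fun y => f y * wdzbar k g y + g y * wdzbar k f y := funext fun y => h1 k y
    rw [he, wdz_add j p (((hfd p).fun_mul ((contDiff_wdzbar k hgc).differentiable (by simp) p)))
        (((hgd p).fun_mul ((contDiff_wdzbar k hfc).differentiable (by simp) p))),
      wdz_mul j p (hfd p) ((contDiff_wdzbar k hgc).differentiable (by simp) p),
      wdz_mul j p (hgd p) ((contDiff_wdzbar k hfc).differentiable (by simp) p), hgp]
    ring
  have hfg0 : f p * g p = 0 := by rw [hgp]; ring
  simp only [MAop]
  have hmat : borderedMat (f p * g p) (fun k => wdzbar k (fun y => f y * g y) p)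
      (fun j => wdz j (fun y => f y * g y) p)
      (Matrix.of fun j k => wdz j (fun y => wdzbar k (fun y' => f y' * g y') y) p)
      = borderedMat 0 (fun k => f p * wdzbar k g p) (fun j => f p * wdz j g p)
        (Matrix.of fun j k => f p * (Matrix.of fun j k => wdz j (fun y => wdzbar k g y) p) j k
          + wdz j f p * wdzbar k g p + wdz j g p * wdzbar k f p) := by
    have e2 : (fun k => wdzbar k (fun y => f y * g y) p) = fun k => f p * wdzbar k g p :=
      funext h1''
    have e3 : (fun j => wdz j (fun y => f y * g y) p) = fun j => f p * wdz j g p :=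
      funext h1'
    have e4 : (Matrix.of fun j k => wdz j (fun y => wdzbar k (fun y' => f y' * g y') y) p)
        = Matrix.of fun j k =>
            f p * (Matrix.of fun j k => wdz j (fun y => wdzbar k g y) p) j k
            + wdz j f p * wdzbar k g p + wdz j g p * wdzbar k f p := by
      ext j k
      simp only [Matrix.of_apply]
      exact h2 j k
    rw [hfg0, e2, e3, e4]
  rw [hmat, key (f p) (fun j => wdz j g p) (fun k => wdzbar k g p)
    (fun j => wdz j f p) (fun k => wdzbar k f p)
    (Matrix.of fun j k => wdz j (fun y => wdzbar k g y) p), hgp]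
  ring
end
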